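/- arXiv:2605.03521 — 3 statements merged into one kernel-verified Lean document; each statement's English description precedes it below -/
import Mathlib

section
/- Let ℱ be a weakly curved operadic open-closed Deligne–Mumford field theory with open unit e_ℱ, meaning ℱ^1_{D_0} = c · e_ℱ for some scalar c, and suppose ℱ satisfies: (1) ℱ^d applied to any sequence containing π^*σ_i composed at the extra marked point with the unit input e_ℱ vanishes, and (2) ℱ_{(σ_d,…,π^*σ_i ∘_* D_k, …, σ_1)} ∘ R^0 = (−1)^{k|σ̲^{<i}|'} ℱ_{(σ_d,…,π^*σ_i,…,σ_1)} ∘ (id ⊗ ℱ_{D_k}) ∘ R^0 for all k ≥ 0. Then ℱ^d vanishes on every sequence in which D_0 appears, i.e. ℱ restricts to an A∞ functor on the category OC̄^{unc} where D_0 is set to zero. -/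
/-!
Statement 14: let `ℱ` be a weakly curved operadic open-closed Deligne–Mumford
field theory with open unit `e_ℱ`, i.e. `ℱ¹_{D₀} = c · e_ℱ` for a scalar `c`,
and suppose that:
(1) `ℱ^d` applied to any sequence containing `π^*σ_i` (with the low entries
    tensored with the identity) and precomposed with `R⁰(α ⊗ e_ℱ)` vanishes; and
(2) `ℱ_{(σ_d, …, π^*σ_i ∘_* D_k, …, σ_1)} ∘ R⁰
      = (−1)^{k |σ^{<i}|'} ℱ_{(σ_d, …, π^*σ_i, …, σ_1)} ∘ (id ⊗ ℱ_{D_k}) ∘ R⁰`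
    for all `k ≥ 0`.
Then `ℱ^d` vanishes on every sequence in which `D₀` appears (through a
composition `π^*σ_i ∘_* D₀`); i.e. `ℱ` restricts to an A∞ functor on the
category `OC̄^{unc}` in which `D₀` is set to zero.

Morphisms are modelled by a `Λ`-module `A` (the category algebra), the functor
values by a module `M`, and the operations `ℱ^d` by `F : List A → (M →ₗ M)`
on lists of composable morphisms (first-applied first).
-/

/-- The sign `(−1)^n` for `n : ℤ`, in a commutative ring. -/
def sgn (Λ : Type*) [CommRing Λ] (n : ℤ) : Λ := if Even n then 1 else -1

/-- `|σ^{≤ p}|' = Σ_{j ≤ p}(|σ_j| − 1)` for the first `p` entries of a degree list. -/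
def primeS (g : List ℤ) (p : ℕ) : ℤ := (g.take p).sum - p

section

variable {Λ : Type} [CommRing Λ] {A M : Type}
  [AddCommGroup A] [Module Λ A] [AddCommGroup M] [Module Λ M]

/-- Replace the entry at (0-indexed) position `p` of `L` by `τ`, and tensor the
entries below it with the identity (`σ × σ_id`). -/
def modSeq (timesId : A → A) (L : List A) (p : ℕ) (τ : A) : List A :=
  (L.take p).map timesId ++ τ :: L.drop (p + 1)

theorem statement_14
    (F : List A → (M →ₗ[Λ] M))            -- the operations `ℱ^d`
    (homog : A → ℤ → Prop)                 -- degrees of chains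
    (pistar : A → A)                        -- the lift `σ ↦ π^*σ`
    (cstar : A → A → A)                     -- composition `∘_*` at the extra marked point
    (timesId : A → A)                       -- `σ ↦ σ × σ_id`
    (D : ℕ → A)                             -- the (fundamental chains of the) discs `D_k`
    (R0 : M →ₗ[Λ] M →ₗ[Λ] M)               -- the monoidal transformation `R⁰`
    (munit : M)                             -- `1 ∈ ℱ(∅)`
    (hR0 : ∀ α : M, R0 α munit = α)
    (e : M)                                 -- the open unit `e_ℱ`
    (c : Λ)
    -- weakly curved: `ℱ_{D₀} = c · e_ℱ`
    (hweak : F [D 0] munit = c • e)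
    -- Property (1): the unit is compatible with any chain of the form `π^*σ`:
    (hprop1 : ∀ (L : List A) (p : ℕ) (α : M), p < L.length →
      F (modSeq timesId L p (pistar (L.getD p 0))) (R0 α e) = 0)
    -- Property (2): compatibility with `D_k` at the extra marked point:
    (hprop2 : ∀ (L : List A) (g : List ℤ) (p k : ℕ) (α β : M), p < L.length →
      g.length = L.length → (∀ q, q < L.length → homog (L.getD q 0) (g.getD q 0)) →
      F (modSeq timesId L p (cstar (pistar (L.getD p 0)) (D k))) (R0 α β) =
        sgn Λ ((k : ℤ) * primeS g p) •
          F (modSeq timesId L p (pistar (L.getD p 0))) (R0 α ((F [D k]) β))) :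
    -- conclusion: `ℱ^d` vanishes on sequences in which `D₀` appears
    ∀ (L : List A) (g : List ℤ) (p : ℕ) (α : M), p < L.length →
      g.length = L.length → (∀ q, q < L.length → homog (L.getD q 0) (g.getD q 0)) →
      F (modSeq timesId L p (cstar (pistar (L.getD p 0)) (D 0))) α = 0 := by
  intro L g p α hp hg hhom
  have h2 := hprop2 L g p 0 α munit hp hg hhom
  rw [hR0] at h2
  rw [h2, hweak]
  have : sgn Λ (((0:ℕ) : ℤ) * primeS g p) = 1 := by norm_num [sgn]
  rw [this, one_smul, map_smul, map_smul, hprop1 L p α hp, smul_zero]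

end
end

section
/- Let ℱ be a semi-strict curved open-closed DMFT with associated curved A∞ algebra 𝒜 = ℱ(0,1). Define the pairing ⟨α_1, α_2⟩ = (−1)^{|α_2|} ℱ_{D_{2,0}}(α_1 × α_2) using the disc with two incoming marked points, and suppose the cyclic rotation of the k+1 marked points on the disc P_{k+1} = D_{2,0} ∘ (D_k × id) acts with sign (−1)^k, so that ℱ_{P_{k+1}}(α × α_0) = (−1)^{k + |α_0||α|} ℱ_{P_{k+1}}(α_0 × α). If ℱ is operadic, then the A∞ operations are cyclic with respect to the pairing: ⟨μ^k(α_1,…,α_k), α_0⟩ = (−1)^{(|α_0|+1)·Σ_{j=1}^{k}(|α_j|+1)} ⟨μ^k(α_0, α_1,…,α_{k−1}), α_k⟩ (up to the sign convention of Solomon–Tukachinsky). -/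
/-!
Statement 16: cyclicity of the A∞ operations of the algebra associated to an
operadic semi-strict curved open-closed DMFT `ℱ`.  With
`μ^k(α) = (−1)^{ε(α)} ℱ_{D_k}(α_1 × ⋯ × α_k)`, `ε(α) = 1 + Σ_j j(|α_j|+1)`, and
the pairing `⟨α₁, α₂⟩ = (−1)^{|α₂|} ℱ_{D_{2,0}}(α₁ × α₂)`, suppose the operation
`ℱ_{P_{k+1}}` associated to the cyclically symmetric disc `P_{k+1} = D_{2,0} ∘ (D_k × id)`
satisfies the rotation identity
`ℱ_{P_{k+1}}(α × α₀) = (−1)^{k + |α₀||α|} ℱ_{P_{k+1}}(α₀ × α)` and the operadic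
identities
`ℱ_{P_{k+1}}(α × α₀) = (−1)^{(k−1)|α₀| + ε(α)} ⟨μ^k(α), α₀⟩` and
`ℱ_{P_{k+1}}(α₀ × α) = (−1)^{(k−1)|α_k| + ε(α₀,…,α_{k−1})} ⟨μ^k(α₀,…,α_{k−1}), α_k⟩`.
Then the A∞ operations are cyclic with respect to the pairing:
`⟨μ^k(α₁,…,α_k), α₀⟩ = (−1)^{(|α₀|+1)·Σ_{j=1}^k (|α_j|+1)} ⟨μ^k(α₀,…,α_{k−1}), α_k⟩`.

Elements of the algebra are modelled as vectors in a `Λ`-module `V` together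
with explicitly given (ℕ-valued) degrees.
-/

/-- `ε(e) = 1 + Σ_{j=1}^k j (e_j + 1)` for a tuple of degrees. -/
def epsST {k : ℕ} (e : Fin k → ℕ) : ℕ :=
  1 + ∑ j : Fin k, (j.val + 1) * (e j + 1)


private lemma statement16_parity (m : ℕ) (d : Fin (m+1) → ℕ) (d₀ : ℕ) :
    (((m * d₀ + epsST d) + (((m+1) + d₀ * ∑ j, d j)
      + (m * d (Fin.last m) + epsST (Fin.cons d₀ (Fin.init d))))) : ZMod 2)
      = (((d₀ + 1) * ∑ j, (d j + 1) : ℕ) : ZMod 2) := by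
  simp only [epsST]
  push_cast
  rw [Fin.sum_univ_castSucc (f := fun j : Fin (m+1) => ((j:ZMod 2)+1)*((d j : ZMod 2)+1)),
      Fin.sum_univ_succ (f := fun j : Fin (m+1) => ((j:ZMod 2)+1)*(((Fin.cons d₀ (Fin.init d) : Fin (m+1) → ℕ) j : ZMod 2)+1)),
      Fin.sum_univ_castSucc (f := fun j : Fin (m+1) => (d j : ZMod 2)),
      Fin.sum_univ_castSucc (f := fun j : Fin (m+1) => ((d j : ZMod 2)+1))]
  simp only [Fin.cons_zero, Fin.cons_succ, Fin.init, Fin.val_zero, Nat.cast_zero,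
    Fin.val_succ, Nat.cast_add, Nat.cast_one, Fin.coe_castSucc, Fin.val_last]
  have h1 : (∑ x : Fin m, (((x:ℕ):ZMod 2)+1)*((d x.castSucc : ZMod 2)+1))
      + ∑ x : Fin m, (((x:ℕ):ZMod 2)+1+1)*((d x.castSucc:ZMod 2)+1)
      = (∑ x : Fin m, (d x.castSucc:ZMod 2)) + (m : ZMod 2) := by
    rw [← Finset.sum_add_distrib]
    have key : ∀ x : Fin m, (((x:ℕ):ZMod 2)+1)*((d x.castSucc : ZMod 2)+1)
        + (((x:ℕ):ZMod 2)+1+1)*((d x.castSucc:ZMod 2)+1) = (d x.castSucc:ZMod 2)+1 := by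
      intro x
      have : ∀ c y : ZMod 2, (c+1)*(y+1) + (c+1+1)*(y+1) = y+1 := by decide
      exact this _ _
    rw [Finset.sum_congr rfl (fun x _ => key x), Finset.sum_add_distrib]
    simp [Finset.card_univ, mul_comm]
  have h2 : (∑ x : Fin m, ((d x.castSucc:ZMod 2)+1))
      = (∑ x : Fin m, (d x.castSucc:ZMod 2)) + (m : ZMod 2) := by
    rw [Finset.sum_add_distrib]; simp [Finset.card_univ, mul_comm]
  generalize hA : (∑ x : Fin m, (((x:ℕ):ZMod 2)+1)*((d x.castSucc : ZMod 2)+1)) = A at *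
  generalize hB : (∑ x : Fin m, (((x:ℕ):ZMod 2)+1+1)*((d x.castSucc:ZMod 2)+1)) = B at *
  generalize hS : (∑ x : Fin m, (d x.castSucc:ZMod 2)) = S at *
  generalize hT : (∑ x : Fin m, ((d x.castSucc:ZMod 2)+1)) = T at *
  generalize hM : ((m:ℕ):ZMod 2) = M at *
  generalize hD : ((d (Fin.last m) : ℕ):ZMod 2) = DL at *
  generalize hD0 : ((d₀:ℕ):ZMod 2) = D0 at *
  clear hA hB hS hT hM hD hD0
  revert h1 h2
  revert A B S T M DL D0
  decide

private lemma statement16_pow {Λ : Type} [CommRing Λ] {a b : ℕ} (h : (a : ZMod 2) = (b : ZMod 2)) :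
    (-1 : Λ) ^ a = (-1) ^ b := by
  have hmod : a % 2 = b % 2 := (ZMod.natCast_eq_natCast_iff a b 2).mp h
  rw [← Nat.div_add_mod a 2, ← Nat.div_add_mod b 2]
  simp [pow_add, pow_mul, neg_one_sq, hmod]

theorem statement_16 {Λ : Type} [CommRing Λ] {V : Type} [AddCommGroup V] [Module Λ V]
    (m : ℕ)
    -- `k = m + 1 ≥ 1` inputs of `μ^k`
    (FP : (Fin (m + 2) → V) → Λ)       -- `ℱ_{P_{k+1}}`, a function of `k+1` ordered entries
    (mu : (Fin (m + 1) → V) → V)       -- `μ^k`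
    (pair : V → V → Λ)                  -- the pairing `⟨·,·⟩`
    (a : Fin (m + 1) → V) (a₀ : V)      -- elements `α_1, …, α_k` and `α_0`
    (d : Fin (m + 1) → ℕ) (d₀ : ℕ)      -- their degrees
    -- the cyclic rotation of the `k+1` marked points acts with sign `(−1)^k`:
    (hrot : FP (Fin.snoc a a₀) =
      (-1 : Λ) ^ ((m + 1) + d₀ * (∑ j, d j)) * FP (Fin.cons a₀ a))
    -- operadicity: `ℱ_{P_{k+1}}(α × α₀) = (−1)^{(k−1)|α₀| + ε(α)} ⟨μ^k(α), α₀⟩`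
    (hop₁ : FP (Fin.snoc a a₀) =
      (-1 : Λ) ^ (m * d₀ + epsST d) * pair (mu a) a₀)
    -- and `ℱ_{P_{k+1}}(α₀ × α) = (−1)^{(k−1)|α_k| + ε(α₀,…,α_{k−1})} ⟨μ^k(α₀,…,α_{k−1}), α_k⟩`
    (hop₂ : FP (Fin.cons a₀ a) =
      (-1 : Λ) ^ (m * d (Fin.last m) + epsST (Fin.cons d₀ (Fin.init d))) *
        pair (mu (Fin.cons a₀ (Fin.init a))) (a (Fin.last m))) :
    -- cyclicity of the A∞ operations:
    pair (mu a) a₀ =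
      (-1 : Λ) ^ ((d₀ + 1) * ∑ j, (d j + 1)) *
        pair (mu (Fin.cons a₀ (Fin.init a))) (a (Fin.last m)) := by
  set A := m * d₀ + epsST d with hAdef
  set R := (m + 1) + d₀ * (∑ j, d j) with hRdef
  set B := m * d (Fin.last m) + epsST (Fin.cons d₀ (Fin.init d)) with hBdef
  have hAA : (-1 : Λ) ^ A * (-1 : Λ) ^ A = 1 := by
    rw [← pow_add, ← two_mul, pow_mul, neg_one_sq, one_pow]
  have key : (-1 : Λ) ^ A * pair (mu a) a₀
      = (-1 : Λ) ^ R * ((-1 : Λ) ^ B * pair (mu (Fin.cons a₀ (Fin.init a))) (a (Fin.last m))) := by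
    rw [← hop₂, ← hrot, hop₁]
  calc pair (mu a) a₀
      = (-1 : Λ) ^ A * ((-1 : Λ) ^ A * pair (mu a) a₀) := by
        rw [← mul_assoc, hAA, one_mul]
    _ = (-1 : Λ) ^ (A + (R + B)) *
          pair (mu (Fin.cons a₀ (Fin.init a))) (a (Fin.last m)) := by
        rw [key, pow_add, pow_add]; ring
    _ = (-1 : Λ) ^ ((d₀ + 1) * ∑ j, (d j + 1)) *
          pair (mu (Fin.cons a₀ (Fin.init a))) (a (Fin.last m)) := by
        congr 1
        apply statement16_pow
        push_cast [hAdef, hRdef, hBdef]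
        have := statement16_parity m d d₀
        push_cast [epsST] at this ⊢
        linear_combination this
end

section
/- Let Γ be a stable graph with a contraction f : Γ → Γ' contracting a single edge, and define d_1(Γ,Γ') = |{φ ∈ Aut⁺(Γ) : f ∘ φ = f}|, d_2(Γ,Γ') = |{edges e of Γ : Γ_e ≅⁺ Γ'}| = |Aut⁺(Γ')\SG⁺(Γ,Γ')|, and d_3(Γ,Γ') = |SG(Γ,Γ')/Aut(Γ)| where SG⁺(Γ,Γ') denotes the set of orientation-compatible single-edge contractions Γ → Γ'. Assuming Aut⁺(Γ') acts freely on SG⁺(Γ,Γ') and |SG(Γ,Γ')| = |SG⁺(Γ,Γ')/Aut⁺(Γ)| · |Aut⁺(Γ)|/d_1(Γ,Γ'), one has d_1(Γ,Γ') · d_2(Γ,Γ') / d_3(Γ,Γ') = |Aut⁺(Γ)| / |Aut⁺(Γ')|. -/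
theorem statement_18 {G G' S : Type} [Group G] [Group G'] [Finite G] [Finite G']
    [Finite S] [Nonempty S] [MulAction G S] [MulAction G' S] (d₁ : ℕ)
    (hstab : ∀ s : S, Nat.card (MulAction.stabilizer G s) = d₁)
    (hfree : ∀ (g' : G') (s : S), g' • s = s → g' = 1)
    (hcount : (Nat.card S : ℚ) =
      (Nat.card (Quotient (MulAction.orbitRel G S)) : ℚ) * (Nat.card G : ℚ) / (d₁ : ℚ)) :
    ((d₁ : ℚ) * (Nat.card (Quotient (MulAction.orbitRel G' S)) : ℚ)) /
        (Nat.card (Quotient (MulAction.orbitRel G S)) : ℚ)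
      = (Nat.card G : ℚ) / (Nat.card G' : ℚ) := by
  -- stabilizers for G' are trivial
  have hstab' : ∀ s : S, MulAction.stabilizer G' s = ⊥ := by
    intro s
    ext g
    simp only [MulAction.mem_stabilizer_iff, Subgroup.mem_bot]
    exact ⟨fun h => hfree g s h, fun h => by simp [h]⟩
  have hS' : (Nat.card S : ℚ)
      = (Nat.card (Quotient (MulAction.orbitRel G' S)) : ℚ) * (Nat.card G' : ℚ) := by
    classical
    have := Fintype.ofFinite S
    have := Fintype.ofFinite G'
    have h := MulAction.card_eq_sum_card_group_div_card_stabilizer G' S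
    simp only [hstab', Subgroup.card_bot] at h
    rw [Nat.card_eq_fintype_card, Nat.card_eq_fintype_card, Nat.card_eq_fintype_card, h]
    push_cast [Finset.sum_const, Finset.card_univ]
    simp [mul_comm]
  -- nonvanishing facts
  have hSpos : (0:ℚ) < Nat.card S := by
    exact_mod_cast Nat.card_pos
  have hG'pos : (0:ℚ) < Nat.card G' := by exact_mod_cast Nat.card_pos
  have hd₁ : (d₁:ℚ) ≠ 0 := by
    have := hstab (Classical.arbitrary S)
    have : 0 < d₁ := this ▸ Nat.card_pos
    exact_mod_cast this.ne'
  have hΩG : (0:ℚ) < Nat.card (Quotient (MulAction.orbitRel G S)) := by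
    have : Nonempty (Quotient (MulAction.orbitRel G S)) := ⟨Quotient.mk _ (Classical.arbitrary S)⟩
    exact_mod_cast Nat.card_pos
  have hΩG' : (0:ℚ) < Nat.card (Quotient (MulAction.orbitRel G' S)) := by
    have : Nonempty (Quotient (MulAction.orbitRel G' S)) := ⟨Quotient.mk _ (Classical.arbitrary S)⟩
    exact_mod_cast Nat.card_pos
  rw [hS'] at hcount
  field_simp
  field_simp at hcount
  linear_combination hcount
end
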